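/- Strong consistency of the Monte Carlo Kullback–Leibler estimator: almost surely, (1/n) · ∑_{i<n} (log p(X_i) − log q(X_i)) converges to the Kullback–Leibler divergence KL(P ‖ Q) as n → ∞. -/

import Mathlib

open MeasureTheory ProbabilityTheory Filter Topology
open scoped NNReal ENNReal

/-- The Kullback–Leibler divergence `KL(P ‖ Q) = ∫ log (dP/dQ) dP`. -/
noncomputable def klDivergence {α : Type*} [MeasurableSpace α] (P Q : Measure α) : ℝ :=
  ∫ x, Real.log ((P.rnDeriv Q x).toReal) ∂P

/-!
On the support of `P` the Radon–Nikodym derivative `dP/dQ` is `p / q` (chain rule through `ν`),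
so `KL(P ‖ Q)` is the `P`-mean of `log p - log q`. The estimator is the empirical mean of this
function along the i.i.d. sample, and the strong law of large numbers applies.
-/

section Densities

variable {α : Type*} [MeasurableSpace α] {ν : Measure α}

lemma ae_withDensity_ne_zero {f : α → ℝ≥0∞} (hf : AEMeasurable f ν) :
    ∀ᵐ x ∂ν.withDensity f, f x ≠ 0 :=
  (ae_withDensity_iff' hf).2 (ae_of_all _ fun _ hx => hx)

variable [SigmaFinite ν] {p q : α → ℝ≥0}

lemma rnDeriv_withDensity_withDensity_ae_eq_div (hp : Measurable p) (hq : Measurable q)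
    (hac : (ν.withDensity fun x => (p x : ℝ≥0∞)) ≪ ν.withDensity fun x => (q x : ℝ≥0∞)) :
    (ν.withDensity fun x => (p x : ℝ≥0∞)).rnDeriv (ν.withDensity fun x => (q x : ℝ≥0∞))
      =ᵐ[ν.withDensity fun x => (p x : ℝ≥0∞)] fun x => (p x : ℝ≥0∞) / q x := by
  have hPν := withDensity_absolutelyContinuous ν fun x => (p x : ℝ≥0∞)
  have hq_ne_zero := hac.ae_le (ae_withDensity_ne_zero hq.coe_nnreal_ennreal.aemeasurable)
  filter_upwards [hPν.ae_le (Measure.rnDeriv_mul_rnDeriv hac),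
    hPν.ae_le (Measure.rnDeriv_withDensity ν hp.coe_nnreal_ennreal),
    hPν.ae_le (Measure.rnDeriv_withDensity ν hq.coe_nnreal_ennreal), hq_ne_zero]
    with x hchain hp_eq hq_eq hqx
  rw [ENNReal.eq_div_iff hqx ENNReal.coe_ne_top, mul_comm, ← hq_eq, ← hp_eq]
  exact hchain

lemma klDivergence_withDensity (hp : Measurable p) (hq : Measurable q)
    (hac : (ν.withDensity fun x => (p x : ℝ≥0∞)) ≪ ν.withDensity fun x => (q x : ℝ≥0∞)) :
    klDivergence (ν.withDensity fun x => (p x : ℝ≥0∞)) (ν.withDensity fun x => (q x : ℝ≥0∞))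
      = ∫ x, Real.log (p x) - Real.log (q x) ∂ν.withDensity fun x => (p x : ℝ≥0∞) := by
  refine integral_congr_ae ?_
  filter_upwards [rnDeriv_withDensity_withDensity_ae_eq_div hp hq hac,
    ae_withDensity_ne_zero hp.coe_nnreal_ennreal.aemeasurable,
    hac.ae_le (ae_withDensity_ne_zero hq.coe_nnreal_ennreal.aemeasurable)] with x hx hpx hqx
  rw [hx, ENNReal.toReal_div, ENNReal.coe_toReal, ENNReal.coe_toReal,
    Real.log_div (by exact_mod_cast hpx) (by exact_mod_cast hqx)]

end Densities

theorem strong_law_ae_comp {Ω E : Type*} [MeasurableSpace Ω] [MeasurableSpace E]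
    {μ : Measure Ω} {P : Measure E} {X : ℕ → Ω → E} (hX : ∀ i, Measurable (X i))
    (hindep : iIndepFun X μ) (hlaw : ∀ i, μ.map (X i) = P)
    {f : E → ℝ} (hf : Measurable f) (hint : Integrable f P) :
    ∀ᵐ ω ∂μ, Tendsto (fun n : ℕ => (∑ i ∈ Finset.range n, f (X i ω)) / n) atTop
      (𝓝 (∫ x, f x ∂P)) := by
  have hident (i : ℕ) : IdentDistrib (f ∘ X i) (f ∘ X 0) μ μ :=
    IdentDistrib.comp ⟨(hX i).aemeasurable, (hX 0).aemeasurable, (hlaw i).trans (hlaw 0).symm⟩ hf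
  have hindep' : Pairwise (Function.onFun (IndepFun · · μ) fun i => f ∘ X i) := fun i j hij =>
    (hindep.comp (fun _ => f) fun _ => hf).indepFun hij
  have hint0 : Integrable (f ∘ X 0) μ :=
    (integrable_map_measure hf.aestronglyMeasurable (hX 0).aemeasurable).1 ((hlaw 0).symm ▸ hint)
  have hmean : ∫ ω, f (X 0 ω) ∂μ = ∫ x, f x ∂P := by
    rw [← hlaw 0, integral_map (hX 0).aemeasurable hf.aestronglyMeasurable]
  simpa only [hmean, Function.comp_apply] using
    strong_law_ae_real (fun i => f ∘ X i) hint0 hindep' hident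

theorem monte_carlo_kl_estimator_strong_consistency_general
    {E Ω : Type*} [MeasurableSpace E] [MeasurableSpace Ω]
    (ν : Measure E) [SigmaFinite ν]
    (p q : E → ℝ≥0) (hp : Measurable p) (hq : Measurable q)
    (hac : (ν.withDensity fun x => (p x : ℝ≥0∞)) ≪ ν.withDensity fun x => (q x : ℝ≥0∞))
    (μ : Measure Ω)
    (X : ℕ → Ω → E) (hXmeas : ∀ i, Measurable (X i))
    (hindep : iIndepFun X μ)
    (hlaw : ∀ i, Measure.map (X i) μ = ν.withDensity fun x => (p x : ℝ≥0∞))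
    (hint : Integrable (fun x => Real.log (p x : ℝ) - Real.log (q x : ℝ))
      (ν.withDensity fun x => (p x : ℝ≥0∞))) :
    ∀ᵐ ω ∂μ, Tendsto
      (fun n : ℕ => (1 / (n : ℝ)) * ∑ i ∈ Finset.range n,
        (Real.log (p (X i ω) : ℝ) - Real.log (q (X i ω) : ℝ)))
      atTop
      (𝓝 (klDivergence (ν.withDensity fun x => (p x : ℝ≥0∞))
        (ν.withDensity fun x => (q x : ℝ≥0∞)))) := by
  have hlogratio : Measurable fun x => Real.log (p x : ℝ) - Real.log (q x : ℝ) :=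
    (Real.measurable_log.comp hp.coe_nnreal_real).sub (Real.measurable_log.comp hq.coe_nnreal_real)
  rw [klDivergence_withDensity hp hq hac]
  filter_upwards [strong_law_ae_comp hXmeas hindep hlaw hlogratio hint] with ω hω
  simpa only [one_div_mul_eq_div] using hω

/-- **Strong consistency of the Monte Carlo Kullback–Leibler estimator.**
Let `ν` be σ-finite, `p q : E → ℝ≥0` measurable densities with `P := ν.withDensity p` and
`Q := ν.withDensity q` probability measures and `P ≪ Q`.  If `(X i)` is an i.i.d. sequence
with law `P` and `x ↦ log (p x) - log (q x)` is `P`-integrable, then almost surely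
`(1/n) * ∑_{i<n} (log p (X i) - log q (X i)) → KL(P ‖ Q)`. -/
theorem monte_carlo_kl_estimator_strong_consistency
    {E Ω : Type*} [MeasurableSpace E] [MeasurableSpace Ω]
    (ν : Measure E) [SigmaFinite ν]
    (p q : E → ℝ≥0) (hp : Measurable p) (hq : Measurable q)
    [IsProbabilityMeasure (ν.withDensity fun x => (p x : ℝ≥0∞))]
    [IsProbabilityMeasure (ν.withDensity fun x => (q x : ℝ≥0∞))]
    (hac : (ν.withDensity fun x => (p x : ℝ≥0∞)) ≪ ν.withDensity fun x => (q x : ℝ≥0∞))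
    (μ : Measure Ω) [IsProbabilityMeasure μ]
    (X : ℕ → Ω → E) (hXmeas : ∀ i, Measurable (X i))
    (hindep : iIndepFun X μ)
    (hlaw : ∀ i, Measure.map (X i) μ = ν.withDensity fun x => (p x : ℝ≥0∞))
    (hint : Integrable (fun x => Real.log (p x : ℝ) - Real.log (q x : ℝ))
      (ν.withDensity fun x => (p x : ℝ≥0∞))) :
    ∀ᵐ ω ∂μ, Tendsto
      (fun n : ℕ => (1 / (n : ℝ)) * ∑ i ∈ Finset.range n,
        (Real.log (p (X i ω) : ℝ) - Real.log (q (X i ω) : ℝ)))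
      atTop
      (𝓝 (klDivergence (ν.withDensity fun x => (p x : ℝ≥0∞))
        (ν.withDensity fun x => (q x : ℝ≥0∞)))) :=
  monte_carlo_kl_estimator_strong_consistency_general ν p q hp hq hac μ X hXmeas hindep hlaw hint
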